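/- Let Q(·|·) : Ω × Ω → ℝ be such that for each fixed t, Q(·|t) is λ-strongly concave on the convex set Ω, and for each fixed u, the gradient ∇Q(u|·) is L-Lipschitz in the second argument. Define M(t) = argmax_{u ∈ Ω} Q(u|t), assumed to exist. Then ‖M(t) − M(t')‖ ≤ (L/λ)·‖t − t'‖ for all t, t' ∈ Ω, i.e., M is (L/λ)-Lipschitz. -/
import Mathlib


open scoped RealInnerProductSpace

/-- The argmax operator of a strongly concave, gradient-Lipschitz family is `(L/λ)`-Lipschitz. -/
theorem stmt_5 {E : Type*} [NormedAddCommGroup E] [InnerProductSpace ℝ E] [CompleteSpace E]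
    (Ω : Set E) (hΩ : Convex ℝ Ω) (Q : E → E → ℝ) (G : E → E → E) (lam L : ℝ)
    (hlam : 0 < lam) (hL : 0 ≤ L)
    (hgrad : ∀ u ∈ Ω, ∀ t ∈ Ω, HasGradientAt (fun w => Q w t) (G u t) u)
    (hconc : ∀ t ∈ Ω, ∀ u₁ ∈ Ω, ∀ u₂ ∈ Ω,
      Q u₁ t - Q u₂ t - ⟪G u₂ t, u₁ - u₂⟫ ≤ -(lam / 2) * ‖u₁ - u₂‖ ^ 2)
    (hlip : ∀ u ∈ Ω, ∀ t₁ ∈ Ω, ∀ t₂ ∈ Ω, ‖G u t₁ - G u t₂‖ ≤ L * ‖t₁ - t₂‖)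
    (M : E → E) (hMmem : ∀ t ∈ Ω, M t ∈ Ω)
    (hMmax : ∀ t ∈ Ω, ∀ u ∈ Ω, Q u t ≤ Q (M t) t) :
    ∀ t ∈ Ω, ∀ t' ∈ Ω, ‖M t - M t'‖ ≤ (L / lam) * ‖t - t'‖ := by
  -- First-order optimality condition at the maximizer.
  have hopt : ∀ t ∈ Ω, ∀ u ∈ Ω, ⟪G (M t) t, u - M t⟫ ≤ 0 := by
    intro t ht u hu
    have hmaxon : IsMaxOn (fun w => Q w t) Ω (M t) := fun x hx => hMmax t ht x hx
    have hmax : IsLocalMaxOn (fun w => Q w t) Ω (M t) := hmaxon.localize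
    have hfd : HasFDerivWithinAt (fun w => Q w t)
        (InnerProductSpace.toDual ℝ E (G (M t) t)) Ω (M t) :=
      ((hgrad (M t) (hMmem t ht) t ht).hasFDerivAt).hasFDerivWithinAt
    have hcone : u - M t ∈ posTangentConeAt Ω (M t) :=
      sub_mem_posTangentConeAt_of_segment_subset (hΩ.segment_subset (hMmem t ht) hu)
    have := hmax.hasFDerivWithinAt_nonpos hfd hcone
    simpa [InnerProductSpace.toDual_apply_apply] using this
  intro t ht t' ht'
  set d : E := M t' - M t with hd
  have hMt := hMmem t ht
  have hMt' := hMmem t' ht'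
  -- Strong monotonicity of the gradient in the first argument (at fixed t).
  have h1 := hconc t ht (M t') hMt' (M t) hMt
  have h2 := hconc t ht (M t) hMt (M t') hMt'
  have hnorm : ‖M t - M t'‖ = ‖d‖ := by rw [hd, norm_sub_rev]
  have hmono : lam * ‖d‖ ^ 2 ≤ ⟪G (M t) t - G (M t') t, d⟫ := by
    have h2' : Q (M t) t - Q (M t') t - ⟪G (M t') t, -d⟫ ≤ -(lam / 2) * ‖d‖ ^ 2 := by
      simpa [hd, norm_sub_rev (M t) (M t'), neg_sub] using h2
    have hsum := add_le_add h1 h2'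
    rw [inner_sub_left]
    simp only [inner_neg_right] at hsum
    nlinarith [hsum]
  -- Bound the RHS using optimality and Lipschitzness.
  have ha : ⟪G (M t) t, d⟫ ≤ 0 := hopt t ht (M t') hMt'
  have hc : ⟪G (M t') t', -d⟫ ≤ 0 := by
    have := hopt t' ht' (M t) hMt
    simpa [hd, neg_sub] using this
  have hlipb : ⟪G (M t') t' - G (M t') t, d⟫ ≤ L * ‖t - t'‖ * ‖d‖ := by
    calc ⟪G (M t') t' - G (M t') t, d⟫ ≤ ‖G (M t') t' - G (M t') t‖ * ‖d‖ :=
          real_inner_le_norm _ _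
      _ ≤ (L * ‖t' - t‖) * ‖d‖ :=
          mul_le_mul_of_nonneg_right (hlip (M t') hMt' t' ht' t ht) (norm_nonneg _)
      _ = L * ‖t - t'‖ * ‖d‖ := by rw [norm_sub_rev]
  have key : lam * ‖d‖ ^ 2 ≤ L * ‖t - t'‖ * ‖d‖ := by
    have hdecomp : ⟪G (M t) t - G (M t') t, d⟫
        = ⟪G (M t) t, d⟫ + ⟪G (M t') t' - G (M t') t, d⟫ + ⟪G (M t') t', -d⟫ := by
      rw [inner_sub_left, inner_sub_left, inner_neg_right]; ring
    calc lam * ‖d‖ ^ 2 ≤ ⟪G (M t) t - G (M t') t, d⟫ := hmono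
      _ = ⟪G (M t) t, d⟫ + ⟪G (M t') t' - G (M t') t, d⟫ + ⟪G (M t') t', -d⟫ := hdecomp
      _ ≤ 0 + (L * ‖t - t'‖ * ‖d‖) + 0 := by linarith [ha, hlipb, hc]
      _ = L * ‖t - t'‖ * ‖d‖ := by ring
  rw [hnorm]
  rcases eq_or_ne d 0 with h0 | h0
  · simp [h0]
    positivity
  · have hdpos : 0 < ‖d‖ := norm_pos_iff.mpr h0
    rw [div_mul_eq_mul_div, le_div_iff₀ hlam]
    nlinarith [key]
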